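/- arXiv:2203.14175 — 3 statements merged into one kernel-verified Lean document; each statement's English description precedes it below -/
import Mathlib

section
/- Let P ⊂ ℙ¹ × ℙ¹ be a finite subscheme concentrated at the point p given by x = 0, z = 0, with ν = ν(P) and τ(P) = (t₀, …, t_{ν−1}). Then the set of monomials { x^i z^j : 0 ≤ j ≤ ν − 1, 0 ≤ i ≤ t_j − 1 } gives a ℂ-vector space basis of the local ring O_{P,p} = O_p / I_P, where O_p = ℂ[x,z]_{(x,z)}. In particular, the ideal I_P admits generators f₀, …, f_{ν−2}, x^{t_{ν−1}} z^{ν−1}, z^ν where each f_k = x^{t_k} z^k + Σ_{j=k+1}^{ν−1} Σ_{i=0}^{t_j − 1} a_{ijk} x^i z^j for some constants a_{ijk} ∈ ℂ. -/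
/-
Write `J_j = (I : z^j) + (z)`. As `J_j` contains `z` and a power of `(x, z)`, the quotient by
`J_j` has basis `1, x, …, x^(t_j - 1)` (an element `c + x·q` with `c ≠ 0` is a unit there), so
`t_j` is the least `i` with `x^i ∈ J_j`, i.e. `x^(t_j) z^j ∈ I + (z^(j+1))`. Downward induction
on the row `j` then shows that every `w z^j` lies in `I` plus the span of the staircase monomials
`x^i z^(j')`, `j ≤ j' < ν`, `i < t_(j')`, and peeling off the lowest row shows that no nonzero
combination of staircase monomials lies in `I`. The spanning argument only uses `z^ν` and one
element `x^(t_j) z^j + (higher rows)` per row, so it applies verbatim to the ideal these generate;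
by independence that ideal is `I`.
-/

noncomputable section

open MvPolynomial

/-- The local model at the point `p = (x = 0, z = 0)`: since a finite scheme
concentrated at `p` has ideal containing a power of `(x, z)`, its local ring is
a quotient of the polynomial ring `ℂ[x, z]`. -/
abbrev Rp : Type := MvPolynomial (Fin 2) ℂ

/-- the coordinate `x` -/
abbrev xv : Rp := X 0

/-- the coordinate `z` -/
abbrev zv : Rp := X 1

/-- `ν(P)` : the smallest `ν` such that `z^ν ∈ I_P`, i.e. such that `P` is
contained in the `ν`-fold thickened horizontal line `z^ν = 0`. -/
def nuOf (I : Ideal Rp) : ℕ := sInf {v : ℕ | zv ^ v ∈ I}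

/-- `τ(P)_j` : the length of the `j`-th layer of the filtration of `P` by
intersections with the reduced horizontal line.  Algebraically, the `j`-th
layer is the subscheme cut out by the colon ideal `(I : z^j)`, and its
intersection with the line `z = 0` has length equal to the colength of
`(I : z^j) + (z)`. -/
def tOf (I : Ideal Rp) (j : ℕ) : ℕ :=
  Module.finrank ℂ (Rp ⧸ (I.colon (Ideal.span {zv ^ j}) ⊔ Ideal.span {zv}))

lemma xv_mem_span : xv ∈ Ideal.span {xv, zv} := Ideal.subset_span (Set.mem_insert _ _)

lemma zv_mem_span : zv ∈ Ideal.span {xv, zv} := Ideal.subset_span (Set.mem_insert_of_mem _ rfl)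

lemma eq_top_of_X_pow_mul_Z_pow_mem {M : Submodule ℂ Rp}
    (h : ∀ a b : ℕ, xv ^ a * zv ^ b ∈ M) : M = ⊤ := by
  rw [Submodule.eq_top_iff']
  intro f
  induction f using MvPolynomial.induction_on' with
  | monomial d c =>
    rw [monomial_eq, Finsupp.prod_fintype _ _ (fun _ => pow_zero _), Fin.prod_univ_two,
      ← smul_eq_C_mul]
    exact M.smul_mem c (h _ _)
  | add p q hp hq => exact M.add_mem hp hq

section

variable {J : Ideal Rp} {N : ℕ}

lemma isUnit_mk_C_add (hN : Ideal.span {xv, zv} ^ N ≤ J) {c : ℂ} (hc : c ≠ 0) {m : Rp}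
    (hm : m ∈ Ideal.span {xv, zv}) : IsUnit (Ideal.Quotient.mk J (C c + m)) := by
  rw [map_add]
  refine IsNilpotent.isUnit_add_left_of_commute ⟨N, ?_⟩ ?_ (Commute.all _ _)
  · rw [← map_pow, Ideal.Quotient.eq_zero_iff_mem]
    exact hN (Ideal.pow_mem_pow hm N)
  · exact (isUnit_iff_ne_zero.mpr hc).map ((Ideal.Quotient.mk J).comp C)

lemma mem_of_C_add_mul_mem (hN : Ideal.span {xv, zv} ^ N ≤ J) {c : ℂ} (hc : c ≠ 0) {m : Rp}
    (hm : m ∈ Ideal.span {xv, zv}) {w : Rp} (h : (C c + m) * w ∈ J) : w ∈ J := by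
  rw [← Ideal.Quotient.eq_zero_iff_mem, map_mul] at h
  rw [← Ideal.Quotient.eq_zero_iff_mem]
  exact (isUnit_mk_C_add hN hc hm).mul_right_eq_zero.mp h

def xOrder (J : Ideal Rp) : ℕ := sInf {i | xv ^ i ∈ J}

lemma X_pow_xOrder_mem (hN : Ideal.span {xv, zv} ^ N ≤ J) : xv ^ xOrder J ∈ J :=
  Nat.sInf_mem (s := {i | xv ^ i ∈ J}) ⟨N, hN (Ideal.pow_mem_pow xv_mem_span N)⟩

lemma X_pow_notMem_of_lt_xOrder {i : ℕ} (hi : i < xOrder J) : xv ^ i ∉ J :=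
  fun h => (Nat.sInf_le h).not_gt hi

-- The factor `x^k` makes the claim inductive: once the constant coefficient is known to vanish,
-- one more `x` moves into it.
lemma coeff_eq_zero_of_X_pow_mul_sum_mem (hN : Ideal.span {xv, zv} ^ N ≤ J) (n : ℕ) :
    ∀ (k : ℕ) (c : ℕ → ℂ), k + n ≤ xOrder J →
      xv ^ k * ∑ i ∈ Finset.range n, c i • xv ^ i ∈ J → ∀ i < n, c i = 0 := by
  induction n with
  | zero => simp
  | succ n ih =>
    intro k c hkn h
    have hsplit : ∑ i ∈ Finset.range (n + 1), c i • xv ^ i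
        = C (c 0) + xv * ∑ i ∈ Finset.range n, c (i + 1) • xv ^ i := by
      rw [Finset.sum_range_succ', Finset.mul_sum, add_comm, pow_zero, smul_eq_C_mul, mul_one]
      exact congrArg _ (Finset.sum_congr rfl fun i _ => by rw [pow_succ', mul_smul_comm])
    have hc0 : c 0 = 0 := by
      by_contra hc0
      refine X_pow_notMem_of_lt_xOrder (J := J) (i := k) (by omega) ?_
      rw [hsplit, mul_comm] at h
      exact mem_of_C_add_mul_mem hN hc0 (Ideal.mul_mem_right _ _ xv_mem_span) h
    have htail := ih (k + 1) (fun i => c (i + 1)) (by omega) (by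
      rwa [hsplit, hc0, map_zero, zero_add, ← mul_assoc, ← pow_succ] at h)
    intro i hi
    rcases i with _ | i
    · exact hc0
    · exact htail i (by omega)

lemma finrank_quotient_eq_xOrder (hN : Ideal.span {xv, zv} ^ N ≤ J)
    (hz : zv ∈ J) : Module.finrank ℂ (Rp ⧸ J) = xOrder J := by
  let v : Fin (xOrder J) → Rp ⧸ J := fun i => Ideal.Quotient.mkₐ ℂ J (xv ^ (i : ℕ))
  have hli : LinearIndependent ℂ v := by
    rw [Fintype.linearIndependent_iff]
    intro g hg
    let c : ℕ → ℂ := fun i => if h : i < xOrder J then g ⟨i, h⟩ else 0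
    have hsum : xv ^ 0 * ∑ i ∈ Finset.range (xOrder J), c i • xv ^ i ∈ J := by
      rw [pow_zero, one_mul, ← Fin.sum_univ_eq_sum_range (fun i => c i • xv ^ i),
        ← Ideal.Quotient.eq_zero_iff_mem, ← Ideal.Quotient.mkₐ_eq_mk ℂ, ← hg, map_sum]
      simp [c, v]
    intro i
    simpa [c, i.isLt] using
      coeff_eq_zero_of_X_pow_mul_sum_mem hN _ 0 c (zero_add _).le hsum i i.isLt
  have hsp : ⊤ ≤ Submodule.span ℂ (Set.range v) := by
    rintro q -
    obtain ⟨f, rfl⟩ := Ideal.Quotient.mkₐ_surjective ℂ J q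
    suffices h :
        (Submodule.span ℂ (Set.range v)).comap (Ideal.Quotient.mkₐ ℂ J).toLinearMap = ⊤ from
      (h ▸ Submodule.mem_top : f ∈ _)
    refine eq_top_of_X_pow_mul_Z_pow_mem fun a b => ?_
    by_cases hJ : xv ^ a * zv ^ b ∈ J
    · rw [Submodule.mem_comap, AlgHom.toLinearMap_apply, Ideal.Quotient.mkₐ_eq_mk,
        Ideal.Quotient.eq_zero_iff_mem.mpr hJ]
      exact zero_mem _
    have hb : b = 0 := by
      by_contra hb
      exact hJ (Ideal.mul_mem_left _ _ (Ideal.pow_mem_of_mem _ hz b (Nat.pos_of_ne_zero hb)))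
    have ha : a < xOrder J := by
      by_contra! ha
      exact hJ (Ideal.mul_mem_right _ _ (Ideal.pow_mem_of_pow_mem _ (X_pow_xOrder_mem hN) ha))
    subst hb
    simpa [v] using Submodule.subset_span (R := ℂ) (Set.mem_range_self (f := v) ⟨a, ha⟩)
  rw [Module.finrank_eq_card_basis (Module.Basis.mk hli hsp), Fintype.card_fin]

end

lemma Ideal.mul_mem_sup_span_of_mem_colon_sup {R : Type*} [CommRing R] {I : Ideal R}
    {y z f : R} (h : f ∈ I.colon (Ideal.span {y}) ⊔ Ideal.span {z}) :
    f * y ∈ I ⊔ Ideal.span {z * y} := by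
  obtain ⟨g, hg, r, hr, rfl⟩ := Submodule.mem_sup.mp h
  obtain ⟨s, rfl⟩ := Ideal.mem_span_singleton'.mp hr
  rw [add_mul, mul_assoc]
  exact Submodule.add_mem_sup (Ideal.mem_colon_span_singleton.mp hg)
    (Ideal.mul_mem_left _ _ (Ideal.mem_span_singleton_self _))

section Columns

variable {I : Ideal Rp} {N : ℕ} (hN : Ideal.span {xv, zv} ^ N ≤ I)
include hN

lemma span_pow_le_colon_sup (j : ℕ) :
    Ideal.span {xv, zv} ^ N ≤ I.colon (Ideal.span {zv ^ j}) ⊔ Ideal.span {zv} :=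
  hN.trans (Ideal.le_colon.trans le_sup_left)

lemma tOf_eq_xOrder (j : ℕ) :
    tOf I j = xOrder (I.colon (Ideal.span {zv ^ j}) ⊔ Ideal.span {zv}) :=
  finrank_quotient_eq_xOrder (span_pow_le_colon_sup hN j)
    (Ideal.mem_sup_right (Ideal.mem_span_singleton_self _))

lemma X_pow_tOf_mul_Z_pow_mem_sup (j : ℕ) :
    xv ^ tOf I j * zv ^ j ∈ I ⊔ Ideal.span {zv ^ (j + 1)} := by
  rw [pow_succ']
  refine Ideal.mul_mem_sup_span_of_mem_colon_sup ?_
  rw [tOf_eq_xOrder hN]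
  exact X_pow_xOrder_mem (span_pow_le_colon_sup hN j)

lemma coeff_eq_zero_of_sum_mem_colon_sup {j : ℕ} (c : ℕ → ℂ)
    (h : ∑ i ∈ Finset.range (tOf I j), c i • xv ^ i ∈
      I.colon (Ideal.span {zv ^ j}) ⊔ Ideal.span {zv}) :
    ∀ i < tOf I j, c i = 0 :=
  coeff_eq_zero_of_X_pow_mul_sum_mem (span_pow_le_colon_sup hN j) _ 0 c
    (by rw [zero_add, tOf_eq_xOrder hN]) (by rwa [pow_zero, one_mul])

lemma Z_pow_nuOf_mem : zv ^ nuOf I ∈ I :=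
  Nat.sInf_mem (s := {v | zv ^ v ∈ I}) ⟨N, hN (Ideal.pow_mem_pow zv_mem_span N)⟩

end Columns

section Staircase

variable (u : ℕ → ℕ) (ν : ℕ)

def stairSum (m : ℕ) : (ℕ → ℕ → ℂ) →ₗ[ℂ] Rp where
  toFun c := ∑ j ∈ Finset.Ico m ν, ∑ i ∈ Finset.range (u j), c i j • (xv ^ i * zv ^ j)
  map_add' c d := by simp only [Pi.add_apply, add_smul, Finset.sum_add_distrib]
  map_smul' a c := by
    simp only [Pi.smul_apply, smul_eq_mul, mul_smul, Finset.smul_sum, RingHom.id_apply]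

def stair (m : ℕ) : Submodule ℂ Rp := LinearMap.range (stairSum u ν m)

variable {u ν}

lemma stairSum_apply (m : ℕ) (c : ℕ → ℕ → ℂ) : stairSum u ν m c =
    ∑ j ∈ Finset.Ico m ν, ∑ i ∈ Finset.range (u j), c i j • (xv ^ i * zv ^ j) := rfl

lemma stairSum_of_le {m : ℕ} (h : ν ≤ m) (c : ℕ → ℕ → ℂ) :
    stairSum u ν m c = 0 := by
  rw [stairSum_apply, Finset.Ico_eq_empty_of_le h, Finset.sum_empty]

lemma stairSum_eq_add_stairSum_succ {m : ℕ} (h : m < ν) (c : ℕ → ℕ → ℂ) :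
    stairSum u ν m c = ∑ i ∈ Finset.range (u m), c i m • (xv ^ i * zv ^ m) +
      stairSum u ν (m + 1) c :=
  Finset.sum_eq_sum_Ico_succ_bot h _

lemma stairSum_mem_span_Z_pow (m : ℕ) (c : ℕ → ℕ → ℂ) :
    stairSum u ν m c ∈ Ideal.span {zv ^ m} := by
  rw [stairSum_apply]
  refine Ideal.sum_mem _ fun j hj => Ideal.sum_mem _ fun i _ => ?_
  refine Submodule.smul_of_tower_mem _ _ (Ideal.mem_span_singleton.mpr ?_)
  exact (pow_dvd_pow zv (Finset.mem_Ico.mp hj).1).mul_left _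

lemma X_pow_mul_Z_pow_mem_stair {m i j : ℕ} (hmj : m ≤ j) (hj : j < ν) (hi : i < u j) :
    xv ^ i * zv ^ j ∈ stair u ν m := by
  refine ⟨fun i' j' => if j' = j ∧ i' = i then 1 else 0, ?_⟩
  simp [stairSum_apply, ite_and, Finset.sum_ite_irrel, hmj, hj, hi]

lemma stair_antitone : Antitone (stair u ν) := by
  rintro m m' h _ ⟨c, rfl⟩
  rw [stairSum_apply]
  refine Submodule.sum_mem _ fun j hj => Submodule.sum_mem _ fun i hi => ?_
  rw [Finset.mem_Ico] at hj
  exact Submodule.smul_mem _ _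
    (X_pow_mul_Z_pow_mem_stair (h.trans hj.1) hj.2 (Finset.mem_range.mp hi))

lemma sum_sigma_smul_eq_stairSum (g : (j : Fin ν) × Fin (u j) → ℂ) :
    ∑ ji, g ji • (xv ^ (ji.2 : ℕ) * zv ^ (ji.1 : ℕ)) = stairSum u ν 0
      (fun i j => if h : j < ν ∧ i < u j then g ⟨⟨j, h.1⟩, ⟨i, h.2⟩⟩ else 0) := by
  rw [stairSum_apply, ← Finset.range_eq_Ico, Fintype.sum_sigma, ← Fin.sum_univ_eq_sum_range]
  refine Finset.sum_congr rfl fun j _ => ?_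
  rw [← Fin.sum_univ_eq_sum_range (fun i => _ • (xv ^ i * zv ^ (j : ℕ)))]
  refine Finset.sum_congr rfl fun i _ => ?_
  rw [dif_pos ⟨j.isLt, i.isLt⟩]

end Staircase

section Spanning

variable {u : ℕ → ℕ} {ν : ℕ}

lemma X_pow_mul_Z_pow_mem_sup_of_add_stairSum_mem {K : Ideal Rp} {b : ℕ} {c : ℕ → ℕ → ℂ}
    (h : xv ^ u b * zv ^ b + stairSum u ν (b + 1) c ∈ K) :
    xv ^ u b * zv ^ b ∈ K ⊔ Ideal.span {zv ^ (b + 1)} := by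
  rw [← add_sub_cancel_right (xv ^ u b * zv ^ b) (stairSum u ν (b + 1) c)]
  exact sub_mem (Ideal.mem_sup_left h) (Ideal.mem_sup_right (stairSum_mem_span_Z_pow _ c))

theorem mul_Z_pow_mem_sup_stair {K : Ideal Rp} (hν : zv ^ ν ∈ K)
    (hstep : ∀ b < ν, xv ^ u b * zv ^ b ∈ K ⊔ Ideal.span {zv ^ (b + 1)}) (b : ℕ) (w : Rp) :
    w * zv ^ b ∈ K.restrictScalars ℂ ⊔ stair u ν b := by
  induction hd : ν - b generalizing b w with
  | zero =>
    exact Submodule.mem_sup_left (K.mul_mem_left _ (Ideal.pow_mem_of_pow_mem _ hν (by omega)))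
  | succ d ih =>
    have hb : b < ν := by omega
    have ih' : ∀ w, w * zv ^ (b + 1) ∈ K.restrictScalars ℂ ⊔ stair u ν b := fun w =>
      sup_le_sup_left (stair_antitone b.le_succ) _ (ih (b + 1) w (by omega))
    suffices h :
        (K.restrictScalars ℂ ⊔ stair u ν b).comap (LinearMap.mulRight ℂ (zv ^ b)) = ⊤ from
      (h ▸ Submodule.mem_top : w ∈ _)
    refine eq_top_of_X_pow_mul_Z_pow_mem fun a e => ?_
    rw [Submodule.mem_comap, LinearMap.mulRight_apply]
    rcases e with _ | e
    · rcases lt_or_ge a (u b) with ha | ha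
      · simpa using Submodule.mem_sup_right (X_pow_mul_Z_pow_mem_stair le_rfl hb ha)
      -- `hstep` trades the corner `x^(u b) z^b` of row `b` for an element of `K` plus row `b + 1`
      obtain ⟨k, hk, r, hr, hkr⟩ := Submodule.mem_sup.mp (hstep b hb)
      obtain ⟨s, rfl⟩ := Ideal.mem_span_singleton'.mp hr
      obtain ⟨a, rfl⟩ := Nat.exists_eq_add_of_le ha
      have hsplit :
          xv ^ (u b + a) * zv ^ 0 * zv ^ b = xv ^ a * k + xv ^ a * s * zv ^ (b + 1) := by
        linear_combination (-xv ^ a) * hkr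
      rw [hsplit]
      exact add_mem (Submodule.mem_sup_left (K.mul_mem_left _ hk)) (ih' _)
    · have hshift : xv ^ a * zv ^ (e + 1) * zv ^ b = xv ^ a * zv ^ e * zv ^ (b + 1) := by ring
      rw [hshift]
      exact ih' _

end Spanning

section Quotient

variable {I : Ideal Rp} {N : ℕ} (hN : Ideal.span {xv, zv} ^ N ≤ I)
include hN

theorem coeff_eq_zero_of_stairSum_mem (ν b : ℕ) (c : ℕ → ℕ → ℂ)
    (h : stairSum (tOf I) ν b c ∈ I) :
    ∀ j, b ≤ j → j < ν → ∀ i < tOf I j, c i j = 0 := by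
  induction hd : ν - b generalizing b with
  | zero => intro j hbj hjν; omega
  | succ d ih =>
    have hb : b < ν := by omega
    rw [stairSum_eq_add_stairSum_succ hb] at h
    obtain ⟨r, hr⟩ := Ideal.mem_span_singleton'.mp
      (stairSum_mem_span_Z_pow (u := tOf I) (ν := ν) (b + 1) c)
    have hcol : ∀ i < tOf I b, c i b = 0 := by
      refine coeff_eq_zero_of_sum_mem_colon_sup hN (fun i => c i b) ?_
      have hcolon : ∑ i ∈ Finset.range (tOf I b), c i b • xv ^ i + r * zv ∈
          I.colon (Ideal.span {zv ^ b}) := by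
        rw [Ideal.mem_colon_span_singleton, add_mul, Finset.sum_mul]
        convert h using 2
        · exact Finset.sum_congr rfl fun i _ => smul_mul_assoc _ _ _
        · rw [← hr]
          ring
      rw [← add_sub_cancel_right (∑ i ∈ Finset.range (tOf I b), c i b • xv ^ i) (r * zv)]
      exact sub_mem (Ideal.mem_sup_left hcolon)
        (Ideal.mem_sup_right (Ideal.mul_mem_left _ r (Ideal.mem_span_singleton_self zv)))
    have htail : stairSum (tOf I) ν (b + 1) c ∈ I := by
      rwa [Finset.sum_eq_zero fun i hi => by rw [hcol i (Finset.mem_range.mp hi), zero_smul],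
        zero_add] at h
    intro j hbj hjν
    rcases hbj.eq_or_lt with rfl | hbj
    · exact hcol
    · exact ih (b + 1) htail (by omega) j hbj hjν

lemma stairSum_eq_zero_of_mem {ν b : ℕ} {c : ℕ → ℕ → ℂ}
    (h : stairSum (tOf I) ν b c ∈ I) :
    stairSum (tOf I) ν b c = 0 := by
  rw [stairSum_apply]
  refine Finset.sum_eq_zero fun j hj => Finset.sum_eq_zero fun i hi => ?_
  rw [Finset.mem_Ico] at hj
  rw [coeff_eq_zero_of_stairSum_mem hN ν b c h j hj.1 hj.2 i (Finset.mem_range.mp hi), zero_smul]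

lemma mul_Z_pow_mem_sup_stair_tOf (b : ℕ) (w : Rp) :
    w * zv ^ b ∈ I.restrictScalars ℂ ⊔ stair (tOf I) (nuOf I) b :=
  mul_Z_pow_mem_sup_stair (Z_pow_nuOf_mem hN) (fun b _ => X_pow_tOf_mul_Z_pow_mem_sup hN b) b w

lemma exists_X_pow_mul_Z_pow_add_stairSum_mem (b : ℕ) :
    ∃ c, xv ^ tOf I b * zv ^ b + stairSum (tOf I) (nuOf I) (b + 1) c ∈ I := by
  obtain ⟨k, hk, r, hr, hkr⟩ := Submodule.mem_sup.mp (X_pow_tOf_mul_Z_pow_mem_sup hN b)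
  obtain ⟨s, rfl⟩ := Ideal.mem_span_singleton'.mp hr
  obtain ⟨k', hk', _, ⟨c, rfl⟩, hkc⟩ :=
    Submodule.mem_sup.mp (mul_Z_pow_mem_sup_stair_tOf hN (b + 1) s)
  refine ⟨-c, ?_⟩
  rw [map_neg, ← hkr, ← hkc]
  convert I.add_mem hk hk' using 1
  abel

theorem eq_of_le_of_Z_pow_mem {G : Ideal Rp} {ν : ℕ} (hGI : G ≤ I) (hν : zv ^ ν ∈ G)
    (hstep : ∀ b < ν, xv ^ tOf I b * zv ^ b ∈ G ⊔ Ideal.span {zv ^ (b + 1)}) : G = I := by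
  refine le_antisymm hGI fun f hf => ?_
  obtain ⟨g, hg, _, ⟨c, rfl⟩, hgc⟩ :=
    Submodule.mem_sup.mp (mul_Z_pow_mem_sup_stair hν hstep 0 f)
  rw [pow_zero, mul_one] at hgc
  have hc : stairSum (tOf I) ν 0 c = 0 := stairSum_eq_zero_of_mem hN (by
    rw [← add_sub_cancel_left g (stairSum (tOf I) ν 0 c), hgc]
    exact I.sub_mem hf (hGI hg))
  rwa [← hgc, hc, add_zero]

lemma linearIndependent_mk_X_pow_mul_Z_pow :
    LinearIndependent ℂ fun ji : (j : Fin (nuOf I)) × Fin (tOf I j) =>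
      Ideal.Quotient.mk I (xv ^ (ji.2 : ℕ) * zv ^ (ji.1 : ℕ)) := by
  rw [Fintype.linearIndependent_iff]
  intro g hg ji
  have hsum : ∑ ji, g ji • (xv ^ (ji.2 : ℕ) * zv ^ (ji.1 : ℕ)) ∈ I := by
    rw [← Ideal.Quotient.eq_zero_iff_mem, ← Ideal.Quotient.mkₐ_eq_mk ℂ, map_sum]
    simpa [map_smul] using hg
  rw [sum_sigma_smul_eq_stairSum] at hsum
  simpa [ji.1.isLt, ji.2.isLt] using
    coeff_eq_zero_of_stairSum_mem hN _ 0 _ hsum ji.1 (Nat.zero_le _) ji.1.isLt ji.2 ji.2.isLt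

lemma span_mk_X_pow_mul_Z_pow :
    ⊤ ≤ Submodule.span ℂ (Set.range fun ji : (j : Fin (nuOf I)) × Fin (tOf I j) =>
      Ideal.Quotient.mk I (xv ^ (ji.2 : ℕ) * zv ^ (ji.1 : ℕ))) := by
  rintro q -
  obtain ⟨f, rfl⟩ := Ideal.Quotient.mk_surjective q
  obtain ⟨g, hg, _, ⟨c, rfl⟩, hgc⟩ :=
    Submodule.mem_sup.mp (mul_Z_pow_mem_sup_stair_tOf hN 0 f)
  rw [pow_zero, mul_one] at hgc
  rw [← hgc, map_add, Ideal.Quotient.eq_zero_iff_mem.mpr hg, zero_add, stairSum_apply,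
    ← Ideal.Quotient.mkₐ_eq_mk ℂ, map_sum]
  refine Submodule.sum_mem _ fun j hj => ?_
  rw [map_sum]
  refine Submodule.sum_mem _ fun i hi => ?_
  rw [map_smul]
  exact Submodule.smul_mem _ _ (Submodule.subset_span
    ⟨⟨⟨j, (Finset.mem_Ico.mp hj).2⟩, ⟨i, Finset.mem_range.mp hi⟩⟩, rfl⟩)

end Quotient

theorem stmt4_general (I : Ideal Rp)
    (hconc : ∃ N : ℕ, (Ideal.span {xv, zv}) ^ N ≤ I) :
    (∃ bas : Module.Basis ((j : Fin (nuOf I)) × Fin (tOf I (j : ℕ))) ℂ (Rp ⧸ I),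
        ∀ ji, bas ji =
          Ideal.Quotient.mk I (xv ^ (ji.2 : ℕ) * zv ^ ((ji.1 : ℕ)))) ∧
    (∃ a : ℕ → ℕ → ℕ → ℂ,
      I = Ideal.span
        ((Set.range fun k : Fin (nuOf I - 1) =>
            xv ^ tOf I (k : ℕ) * zv ^ (k : ℕ) +
              ∑ j ∈ Finset.Ico ((k : ℕ) + 1) (nuOf I),
                ∑ i ∈ Finset.range (tOf I j), a i j (k : ℕ) • (xv ^ i * zv ^ j)) ∪
          {xv ^ tOf I (nuOf I - 1) * zv ^ (nuOf I - 1), zv ^ nuOf I})) := by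
  obtain ⟨N, hN⟩ := hconc
  refine ⟨⟨Module.Basis.mk (linearIndependent_mk_X_pow_mul_Z_pow hN)
    (span_mk_X_pow_mul_Z_pow hN), fun ji => Module.Basis.mk_apply _ _ _⟩, ?_⟩
  choose c hc using exists_X_pow_mul_Z_pow_add_stairSum_mem hN
  refine ⟨fun i j k => c k i j, (eq_of_le_of_Z_pow_mem hN (ν := nuOf I) ?_ ?_ ?_).symm⟩
  · rw [Ideal.span_le]
    rintro _ (⟨k, rfl⟩ | rfl | rfl)
    · exact hc k
    · simpa [stairSum_of_le (by omega : nuOf I ≤ nuOf I - 1 + 1)] using hc (nuOf I - 1)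
    · exact Z_pow_nuOf_mem hN
  · exact Ideal.subset_span (Or.inr (Or.inr rfl))
  · intro b hb
    rcases lt_or_ge (b + 1) (nuOf I) with hb' | hb'
    · exact X_pow_mul_Z_pow_mem_sup_of_add_stairSum_mem (c := c b)
        (Ideal.subset_span (Or.inl ⟨⟨b, by omega⟩, rfl⟩))
    · obtain rfl : b = nuOf I - 1 := by omega
      exact Ideal.mem_sup_left (Ideal.subset_span (Or.inr (Or.inl rfl)))

/-- Let `P` be a finite subscheme of length `l ≥ 1`
concentrated at `p = (x = 0, z = 0)`, given by an ideal `I ⊆ (x, z)` of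
colength `l` containing a power of `(x, z)`.  Write `ν = ν(P)` and
`τ(P) = (t₀, …, t_{ν−1})`.  Then the monomials
`{x^i z^j : 0 ≤ j ≤ ν − 1, 0 ≤ i ≤ t_j − 1}` give a `ℂ`-basis of
`O_{P,p} = O_p / I_P`; and `I` admits generators
`f₀, …, f_{ν−2}, x^{t_{ν−1}} z^{ν−1}, z^ν` with
`f_k = x^{t_k} z^k + Σ_{j=k+1}^{ν−1} Σ_{i=0}^{t_j−1} a_{ijk} x^i z^j`. -/
theorem stmt4 (I : Ideal Rp) (l : ℕ) (hl : 1 ≤ l)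
    (hIm : I ≤ Ideal.span {xv, zv})
    (hconc : ∃ N : ℕ, (Ideal.span {xv, zv}) ^ N ≤ I)
    (hlen : Module.finrank ℂ (Rp ⧸ I) = l) :
    (∃ bas : Module.Basis ((j : Fin (nuOf I)) × Fin (tOf I (j : ℕ))) ℂ (Rp ⧸ I),
        ∀ ji, bas ji =
          Ideal.Quotient.mk I (xv ^ (ji.2 : ℕ) * zv ^ ((ji.1 : ℕ)))) ∧
    (∃ a : ℕ → ℕ → ℕ → ℂ,
      I = Ideal.span
        ((Set.range fun k : Fin (nuOf I - 1) =>
            xv ^ tOf I (k : ℕ) * zv ^ (k : ℕ) +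
              ∑ j ∈ Finset.Ico ((k : ℕ) + 1) (nuOf I),
                ∑ i ∈ Finset.range (tOf I j), a i j (k : ℕ) • (xv ^ i * zv ^ j)) ∪
          {xv ^ tOf I (nuOf I - 1) * zv ^ (nuOf I - 1), zv ^ nuOf I})) :=
  stmt4_general I hconc
end
end

section
/- With S(k, l, n) as above and l > n + 1, the top locus S(l − n − 1, l, n) equals Ver(l, l), the locus of length-l schemes contained in a single vertical line of bidegree (1, 0). -/
/-- Abstract setup encoding the geometry of zero-dimensional closed subschemes
of the smooth quadric surface `ℙ¹ × ℙ¹` over `ℂ`, and of curves on it, as used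
in the paper.  `A` is the first `ℙ¹` factor (a point `a : A` determines the
vertical line `{a} × ℙ¹`, of bidegree `(1,0)`) and `B` is the second factor
(a point `b : B` determines the horizontal line `ℙ¹ × {b}`, of bidegree `(0,1)`). -/
structure QuadricSetup where
  /-- the first `ℙ¹` factor, indexing the lines of bidegree `(1,0)` -/
  A : Type
  /-- the second `ℙ¹` factor, indexing the lines of bidegree `(0,1)` -/
  B : Type
  /-- zero-dimensional closed subschemes `Z ⊂ ℙ¹ × ℙ¹` -/
  Sub : Type
  /-- the topology coming from the Hilbert schemes `Hilb(l)` -/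
  top : TopologicalSpace Sub
  /-- the length of a finite subscheme -/
  len : Sub → ℕ
  /-- `lenV Z a` = length of `Z ∩ D`, `D` the vertical line of bidegree `(1,0)` over `a` -/
  lenV : Sub → A → ℕ
  /-- `lenH Z b` = length of `Z ∩ E`, `E` the horizontal line of bidegree `(0,1)` over `b` -/
  lenH : Sub → B → ℕ
  /-- `h1 Z m n = dim_ℂ H¹(I_Z(m, n))`, where `I_Z` is the ideal sheaf of `Z`
  in `ℙ¹ × ℙ¹` and `O(m,n)` the line bundle of bidegree `(m,n)` -/
  h1 : Sub → ℤ → ℤ → ℕ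
  /-- the (finitely many) vertical lines meeting `Z` -/
  suppV : Sub → Finset A
  /-- the (finitely many) horizontal lines meeting `Z` -/
  suppH : Sub → Finset B
  /-- `sigma Z a` is the string `σ(X)` of the part `X` of `Z` supported on the
  vertical line over `a`: the lengths occurring in the filtration of `X` by
  intersections with the reduced line; the empty list if `Z` misses the line. -/
  sigma : Sub → A → List ℕ
  /-- `tau Z b`: the analogous string for horizontal lines -/
  tau : Sub → B → List ℕ
  /-- the topological Euler characteristic of a constructible family of subschemes -/
  chi : Set Sub → ℤ
  /-- the topological Euler characteristic `χ(Hilb(l, (m, n)))` of the flag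
  Hilbert scheme of pairs `(Z, C)` with `C ⊂ ℙ¹ × ℙ¹` a curve of bidegree
  `(m, n)` and `Z ⊂ C` a finite subscheme of length `l` -/
  chiFlag : ℕ → ℕ → ℕ → ℤ
  /-- curves (one-dimensional effective divisors) in `ℙ¹ × ℙ¹` -/
  Curve : Type
  /-- the bidegree of a curve -/
  bideg : Curve → ℕ × ℕ
  /-- irreducibility of a curve -/
  IsIrreducibleCurve : Curve → Prop
  /-- `memCurve Z C` : the finite subscheme `Z` is contained in the curve `C` -/
  memCurve : Sub → Curve → Prop
  /-- containment of curves -/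
  curveLE : Curve → Curve → Prop
  /-- union (divisor sum) of two curves -/
  unionC : Curve → Curve → Curve
  /-- the vertical line over `a`, as a curve of bidegree `(1,0)` -/
  lineV : A → Curve
  /-- the horizontal line over `b`, as a curve of bidegree `(0,1)` -/
  lineH : B → Curve
  /-- the `ν`-fold thickening `νE` of the horizontal line `E` over `b`,
  a curve of bidegree `(0, ν)` -/
  thickH : B → ℕ → Curve
  /-- the scheme-theoretic intersection `Z ∩ C` -/
  interC : Sub → Curve → Sub
  sigma_sorted : ∀ Z a, (sigma Z a).Chain' (· ≥ ·)
  sigma_pos : ∀ Z a, ∀ r ∈ sigma Z a, 0 < r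
  sigma_eq_nil : ∀ Z a, a ∉ suppV Z → sigma Z a = []
  sigma_head : ∀ Z a, (sigma Z a).headI = lenV Z a
  sigma_sum : ∀ Z, ∑ a ∈ suppV Z, (sigma Z a).sum = len Z
  tau_sorted : ∀ Z b, (tau Z b).Chain' (· ≥ ·)
  tau_pos : ∀ Z b, ∀ r ∈ tau Z b, 0 < r
  tau_eq_nil : ∀ Z b, b ∉ suppH Z → tau Z b = []
  tau_head : ∀ Z b, (tau Z b).headI = lenH Z b
  tau_sum : ∀ Z, ∑ b ∈ suppH Z, (tau Z b).sum = len Z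
  bideg_lineV : ∀ a, bideg (lineV a) = (1, 0)
  bideg_lineH : ∀ b, bideg (lineH b) = (0, 1)
  bideg_unionC : ∀ C C', bideg (unionC C C') = bideg C + bideg C'
  bideg_thickH : ∀ b ν, bideg (thickH b ν) = (0, ν)
  interC_mem : ∀ Z C, memCurve (interC Z C) C
  chi_empty : chi ∅ = 0

namespace QuadricSetup

variable (Q : QuadricSetup)

/-- `μ(Z)` : the smallest `μ` such that a curve of bidegree `(μ, 0)` contains `Z`. -/
noncomputable def mu (Z : Q.Sub) : ℕ :=
  sInf {μ | ∃ C, Q.bideg C = (μ, 0) ∧ Q.memCurve Z C}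

/-- `ν(Z)` : the smallest `ν` such that a curve of bidegree `(0, ν)` contains `Z`. -/
noncomputable def nu (Z : Q.Sub) : ℕ :=
  sInf {ν | ∃ C, Q.bideg C = (0, ν) ∧ Q.memCurve Z C}

/-- The locus `S(k, l, n)` of subschemes `Z` of length `l` with
`k = Σ_i Σ_{j : σ(X_i)_j > n+1} (σ(X_i)_j − n − 1)` (truncated subtraction
realizes the condition `σ(X_i)_j > n + 1`). -/
def Sloc (k l n : ℕ) : Set Q.Sub :=
  {Z | Q.len Z = l ∧ ∑ a ∈ Q.suppV Z, ((Q.sigma Z a).map fun r => r - (n + 1)).sum = k}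

/-- The locus `T(k, l, m)` of subschemes `Z` of length `l` with
`k = Σ_j Σ_{i : τ(Y_j)_i > m+1} (τ(Y_j)_i − m − 1)`. -/
def Tloc (k l m : ℕ) : Set Q.Sub :=
  {Z | Q.len Z = l ∧ ∑ b ∈ Q.suppH Z, ((Q.tau Z b).map fun r => r - (m + 1)).sum = k}

/-- `Ver(e, l)` : length-`l` subschemes meeting some vertical line in length `e`. -/
def Ver (e l : ℕ) : Set Q.Sub := {Z | Q.len Z = l ∧ ∃ a, Q.lenV Z a = e}

/-- `Hor(e, l)` : length-`l` subschemes meeting some horizontal line in length `e`. -/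
def Hor (e l : ℕ) : Set Q.Sub := {Z | Q.len Z = l ∧ ∃ b, Q.lenH Z b = e}

/-- The Brill–Noether locus `BN(k, l, (m, n)) = {Z ∈ Hilb(l) : dim_ℂ H¹(I_Z(m,n)) = k}`. -/
def BN (k l : ℕ) (m n : ℤ) : Set Q.Sub := {Z | Q.len Z = l ∧ Q.h1 Z m n = k}

end QuadricSetup

/-!
Each entry `r ≥ 1` of a string contributes `r - (n + 1) ≤ r - 1` to the excess, and an entry with
positive excess contributes exactly `r - 1 - n`. So once the total excess is positive it is at most
`l - n - (number of entries)`, and the top value `l - n - 1` leaves room for a single entry only: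
`Z` has the single string `[l]`, i.e. lies on one vertical line. Conversely the string `[l]` has
excess `l - n - 1`.
-/

/-- The contribution `Σ_{j : σ_j > n+1} (σ_j − n − 1)` of one string `σ` to the index `k` of
`S(k, l, n)`. -/
def stringExcess (n : ℕ) (L : List ℕ) : ℕ := (L.map fun r => r - (n + 1)).sum

section stringExcess

variable {n : ℕ} {L : List ℕ}

@[simp]
lemma stringExcess_nil : stringExcess n [] = 0 := rfl

@[simp]
lemma stringExcess_cons (r : ℕ) (L : List ℕ) :
    stringExcess n (r :: L) = r - (n + 1) + stringExcess n L := by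
  simp [stringExcess]

lemma stringExcess_add_length_le (hL : ∀ r ∈ L, 0 < r) :
    stringExcess n L + L.length ≤ L.sum := by
  induction L with
  | nil => simp
  | cons r L ih =>
    have hr := hL r List.mem_cons_self
    have := ih fun s hs => hL s (List.mem_cons_of_mem r hs)
    simp only [stringExcess_cons, List.length_cons, List.sum_cons]
    omega

lemma stringExcess_add_add_length_le (hL : ∀ r ∈ L, 0 < r) (he : 0 < stringExcess n L) :
    stringExcess n L + n + L.length ≤ L.sum := by
  induction L with
  | nil => simp at he
  | cons r L ih =>
    have hr := hL r List.mem_cons_self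
    have hL' : ∀ s ∈ L, 0 < s := fun s hs => hL s (List.mem_cons_of_mem r hs)
    have := stringExcess_add_length_le (n := n) hL'
    simp only [stringExcess_cons, List.length_cons, List.sum_cons] at he ⊢
    by_cases hpos : 0 < stringExcess n L
    · have := ih hL' hpos
      omega
    · omega

lemma sum_stringExcess_add_add_sum_length_le {ι : Type*} {s : Finset ι} {f : ι → List ℕ}
    (hf : ∀ i ∈ s, ∀ r ∈ f i, 0 < r) {i₀ : ι} (hi₀ : i₀ ∈ s) (he : 0 < stringExcess n (f i₀)) :
    ∑ i ∈ s, stringExcess n (f i) + n + ∑ i ∈ s, (f i).length ≤ ∑ i ∈ s, (f i).sum := by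
  classical
  have hrest : ∑ i ∈ s.erase i₀, (stringExcess n (f i) + (f i).length) ≤
      ∑ i ∈ s.erase i₀, (f i).sum :=
    Finset.sum_le_sum fun i hi => stringExcess_add_length_le (hf i (Finset.mem_of_mem_erase hi))
  have hi₀_le := stringExcess_add_add_length_le (hf i₀ hi₀) he
  rw [Finset.sum_add_distrib] at hrest
  rw [← Finset.sum_erase_add _ _ hi₀, ← Finset.sum_erase_add _ _ hi₀,
    ← Finset.sum_erase_add _ _ hi₀]
  omega

end stringExcess

lemma List.eq_nil_of_sum_eq_zero_of_pos {L : List ℕ} (hL : ∀ r ∈ L, 0 < r) (h : L.sum = 0) :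
    L = [] :=
  List.eq_nil_iff_forall_not_mem.2 fun r hr => (hL r hr).ne' (List.sum_eq_zero_iff.1 h r hr)

namespace QuadricSetup

variable (Q : QuadricSetup) {Z : Q.Sub} {a : Q.A}

lemma mem_suppV_of_sigma_ne_nil (h : Q.sigma Z a ≠ []) : a ∈ Q.suppV Z := by
  by_contra ha
  exact h (Q.sigma_eq_nil Z a ha)

lemma sigma_eq_nil_of_sigma_eq_singleton_len (h : Q.sigma Z a = [Q.len Z]) {b : Q.A}
    (hb : b ≠ a) : Q.sigma Z b = [] := by
  by_cases hbZ : b ∈ Q.suppV Z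
  · have haZ : a ∈ Q.suppV Z := Q.mem_suppV_of_sigma_ne_nil (by simp [h])
    have hle := Finset.add_le_sum (f := fun a => (Q.sigma Z a).sum) (fun _ _ => Nat.zero_le _)
      haZ hbZ hb.symm
    simp only [Q.sigma_sum, h, List.sum_singleton] at hle
    exact List.eq_nil_of_sum_eq_zero_of_pos (Q.sigma_pos Z b) (by omega)
  · exact Q.sigma_eq_nil Z b hbZ

lemma lenV_eq_len_iff (hZ : 0 < Q.len Z) : Q.lenV Z a = Q.len Z ↔ Q.sigma Z a = [Q.len Z] := by
  refine ⟨fun h => ?_, fun h => by rw [← Q.sigma_head, h]; rfl⟩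
  rw [← Q.sigma_head] at h
  obtain ⟨r, t, hrt⟩ : ∃ r t, Q.sigma Z a = r :: t := by
    cases hσ : Q.sigma Z a with
    | nil => simp [hσ] at h; omega
    | cons r t => exact ⟨r, t, rfl⟩
  rw [hrt, List.headI_cons] at h
  have haZ : a ∈ Q.suppV Z := Q.mem_suppV_of_sigma_ne_nil (by simp [hrt])
  have hsum := Finset.single_le_sum (f := fun a => (Q.sigma Z a).sum)
    (fun _ _ => Nat.zero_le _) haZ
  simp only [Q.sigma_sum, hrt, List.sum_cons, h] at hsum
  have ht : t = [] := List.eq_nil_of_sum_eq_zero_of_pos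
    (fun s hs => Q.sigma_pos Z a s (by simp [hrt, hs])) (by omega)
  rw [hrt, h, ht]

lemma sum_stringExcess_sigma_of_sigma_eq_singleton_len (n : ℕ) (h : Q.sigma Z a = [Q.len Z]) :
    ∑ b ∈ Q.suppV Z, stringExcess n (Q.sigma Z b) = Q.len Z - (n + 1) := by
  have haZ : a ∈ Q.suppV Z := Q.mem_suppV_of_sigma_ne_nil (by simp [h])
  rw [Finset.sum_eq_single_of_mem a haZ fun b _ hb => by
    rw [Q.sigma_eq_nil_of_sigma_eq_singleton_len h hb, stringExcess_nil]]
  simp [h]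

lemma exists_sigma_eq_singleton_of_mem_Sloc {l n : ℕ} (hl : n + 1 < l)
    (hZ : Z ∈ Q.Sloc (l - n - 1) l n) : ∃ a, Q.sigma Z a = [l] := by
  obtain ⟨hlen, hk⟩ := hZ
  change ∑ a ∈ Q.suppV Z, stringExcess n (Q.sigma Z a) = l - n - 1 at hk
  obtain ⟨a, ha, hea⟩ := Finset.exists_ne_zero_of_sum_ne_zero (hk.trans_ne (by omega))
  have hlength : ∑ b ∈ Q.suppV Z, (Q.sigma Z b).length ≤ 1 := by
    have := sum_stringExcess_add_add_sum_length_le (fun b _ => Q.sigma_pos Z b) ha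
      (Nat.pos_of_ne_zero hea)
    rw [Q.sigma_sum, hlen, hk] at this
    omega
  have hσa_pos : 0 < (Q.sigma Z a).length :=
    List.length_pos_iff.2 fun h => hea (by rw [h, stringExcess_nil])
  have hrest : ∀ b ∈ Q.suppV Z, b ≠ a → Q.sigma Z b = [] := fun b hb hba => by
    have := Finset.add_le_sum (f := fun b => (Q.sigma Z b).length) (fun _ _ => Nat.zero_le _)
      ha hb hba.symm
    exact List.length_eq_zero_iff.1 (by omega)
  obtain ⟨r, hr⟩ : ∃ r, Q.sigma Z a = [r] := by
    refine List.length_eq_one_iff.1 (le_antisymm (le_trans ?_ hlength) hσa_pos)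
    exact Finset.single_le_sum (f := fun b => (Q.sigma Z b).length) (fun _ _ => Nat.zero_le _) ha
  have hsum := Q.sigma_sum Z
  rw [Finset.sum_eq_single_of_mem a ha fun b hb hba => by rw [hrest b hb hba, List.sum_nil],
    hr, List.sum_singleton, hlen] at hsum
  exact ⟨a, hsum ▸ hr⟩

end QuadricSetup

/-- For `l > n + 1`, the top locus `S(l − n − 1, l, n)` equals
`Ver(l, l)`, the locus of length-`l` schemes contained in a single vertical
line of bidegree `(1, 0)`. -/
theorem stmt12 (Q : QuadricSetup) (l n : ℕ) (hl : n + 1 < l) :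
    Q.Sloc (l - n - 1) l n = Q.Ver l l := by
  ext Z
  constructor
  · intro hZ
    obtain ⟨a, ha⟩ := Q.exists_sigma_eq_singleton_of_mem_Sloc hl hZ
    obtain ⟨rfl, -⟩ := hZ
    exact ⟨rfl, a, (Q.lenV_eq_len_iff (by omega)).2 ha⟩
  · rintro ⟨rfl, a, ha⟩
    rw [Q.lenV_eq_len_iff (by omega)] at ha
    exact ⟨rfl, (Q.sum_stringExcess_sigma_of_sigma_eq_singleton_len n ha).trans (by omega)⟩
end

section
/- Assume l ≤ 2n + 3. Then for all k ≥ 1, S(k, l, n) = Ver(k + n + 1, l), the locus of length-l schemes Z for which some vertical line D of bidegree (1,0) satisfies length(Z ∩ D) = k + n + 1. -/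
/-!
Put `c = n + 1`. The entries of all the strings `σ(X_i)` of `Z` add up to `l ≤ 2c + 1`, so at
most one of them exceeds `c`, and if one does, the excess sum defining `S(k, l, n)` is that entry
minus `c`. The strings are nonincreasing with head `length(Z ∩ D)`, so an entry exceeding `c`
is the head of its string, i.e. the length of `Z` along a vertical line; hence `k = e - c`
exactly when some vertical line meets `Z` in length `e = k + n + 1`.
-/

theorem Multiset.sum_map_tsub_eq_of_mem_of_sum_le {M : Multiset ℕ} {c x : ℕ}
    (hsum : M.sum ≤ 2 * c + 1) (hx : x ∈ M) (hcx : c < x) :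
    (M.map fun r => r - c).sum = x - c := by
  obtain ⟨M', rfl⟩ := Multiset.exists_cons_of_mem hx
  have hrest : ∀ r ∈ M', r ≤ c := fun r hr => by
    have := Multiset.le_sum_of_mem hr
    rw [Multiset.sum_cons] at hsum
    omega
  have hzero : (M'.map fun r => r - c).sum = 0 :=
    Multiset.sum_eq_zero_iff.2 fun y hy => by
      obtain ⟨r, hr, rfl⟩ := Multiset.mem_map.1 hy
      exact Nat.sub_eq_zero_of_le (hrest r hr)
  rw [Multiset.map_cons, Multiset.sum_cons, hzero, add_zero]

theorem Multiset.exists_lt_of_sum_map_tsub_ne_zero {M : Multiset ℕ} {c : ℕ}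
    (h : (M.map fun r => r - c).sum ≠ 0) : ∃ x ∈ M, c < x := by
  contrapose! h
  exact Multiset.sum_eq_zero_iff.2 fun y hy => by
    obtain ⟨r, hr, rfl⟩ := Multiset.mem_map.1 hy
    exact Nat.sub_eq_zero_of_le (h r hr)

theorem List.le_headI_of_isChain_ge {α : Type*} [Preorder α] [Inhabited α] {L : List α}
    (hL : L.IsChain (· ≥ ·)) {r : α} (hr : r ∈ L) :
    r ≤ L.headI := by
  cases L with
  | nil => simp at hr
  | cons h t =>
    rcases List.mem_cons.1 hr with rfl | hrt
    · exact le_rfl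
    · exact (List.pairwise_cons.1 (List.isChain_iff_pairwise.1 hL)).1 r hrt

namespace QuadricSetup

variable (Q : QuadricSetup)

def sigmaEntries (Z : Q.Sub) : Multiset ℕ :=
  ∑ a ∈ Q.suppV Z, (Q.sigma Z a : Multiset ℕ)

theorem sum_sigmaEntries (Z : Q.Sub) : (Q.sigmaEntries Z).sum = Q.len Z := by
  rw [← Q.sigma_sum Z, sigmaEntries, Multiset.sum_sum]
  simp only [Multiset.sum_coe]

theorem sum_map_sigmaEntries (Z : Q.Sub) (g : ℕ → ℕ) :
    ((Q.sigmaEntries Z).map g).sum = ∑ a ∈ Q.suppV Z, ((Q.sigma Z a).map g).sum := by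
  rw [sigmaEntries, ← Multiset.coe_mapAddMonoidHom, map_sum, Multiset.sum_sum]
  simp only [Multiset.coe_mapAddMonoidHom, Multiset.map_coe, Multiset.sum_coe]

theorem le_lenV_of_mem_sigma {Z : Q.Sub} {a : Q.A} {r : ℕ} (hr : r ∈ Q.sigma Z a) :
    r ≤ Q.lenV Z a :=
  Q.sigma_head Z a ▸ List.le_headI_of_isChain_ge (Q.sigma_sorted Z a) hr

theorem exists_le_lenV_of_mem_sigmaEntries {Z : Q.Sub} {r : ℕ} (hr : r ∈ Q.sigmaEntries Z) :
    ∃ a, r ≤ Q.lenV Z a := by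
  obtain ⟨a, -, hra⟩ := Multiset.mem_sum.1 hr
  exact ⟨a, Q.le_lenV_of_mem_sigma hra⟩

theorem lenV_mem_sigmaEntries {Z : Q.Sub} {a : Q.A} (ha : 0 < Q.lenV Z a) :
    Q.lenV Z a ∈ Q.sigmaEntries Z := by
  have hne : Q.sigma Z a ≠ [] := fun h => by
    rw [← Q.sigma_head Z a, h] at ha
    exact ha.ne rfl
  have hsupp : a ∈ Q.suppV Z := by
    by_contra h
    exact hne (Q.sigma_eq_nil Z a h)
  obtain ⟨r, t, hrt⟩ := List.exists_cons_of_ne_nil hne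
  refine Multiset.mem_sum.2 ⟨a, hsupp, ?_⟩
  rw [← Q.sigma_head Z a, hrt]
  exact Multiset.mem_coe.2 List.mem_cons_self

end QuadricSetup

/-- If `l ≤ 2n + 3`, then for all `k ≥ 1` one has
`S(k, l, n) = Ver(k + n + 1, l)`. -/
theorem stmt13 (Q : QuadricSetup) (l n : ℕ) (hl : l ≤ 2 * n + 3)
    (k : ℕ) (hk : 1 ≤ k) :
    Q.Sloc k l n = Q.Ver (k + n + 1) l := by
  ext Z
  simp only [QuadricSetup.Sloc, QuadricSetup.Ver, Set.mem_ofPred_eq, ← Q.sum_map_sigmaEntries]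
  refine and_congr_right fun hlen => ?_
  have hsum : (Q.sigmaEntries Z).sum ≤ 2 * (n + 1) + 1 := by
    rw [Q.sum_sigmaEntries, hlen]; omega
  have key {a : Q.A} (ha : n + 1 < Q.lenV Z a) :
      ((Q.sigmaEntries Z).map fun r => r - (n + 1)).sum = Q.lenV Z a - (n + 1) :=
    Multiset.sum_map_tsub_eq_of_mem_of_sum_le hsum (Q.lenV_mem_sigmaEntries (by omega)) ha
  constructor
  · intro hexcess
    obtain ⟨x, hx, hnx⟩ :=
      Multiset.exists_lt_of_sum_map_tsub_ne_zero (by rw [hexcess]; omega)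
    obtain ⟨a, hxa⟩ := Q.exists_le_lenV_of_mem_sigmaEntries hx
    exact ⟨a, by have := key (hnx.trans_le hxa); omega⟩
  · rintro ⟨a, ha⟩
    have := key (a := a) (by omega)
    omega
end
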